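/- arXiv:2010.05992 — 2 statements merged into one kernel-verified Lean document; each statement's English description precedes it below -/
import Mathlib

section
/- There exists K such that for all k ≥ K the following holds: if F is a family of k-element finite sets such that for any four distinct sets A, B, C, D ∈ F one has (A △ B) ∩ (C △ D) ≠ ∅, then |F| ≤ 2.148^k. -/
open scoped symmDiff

open Finset
open scoped symmDiff

lemma sum_choose_le (n s : ℕ) (y : ℝ) (hy0 : 0 < y) (hy1 : y ≤ 1) :
    (∑ i ∈ Finset.range (s+1), (n.choose i : ℝ)) * y ^ s ≤ (1 + y) ^ n := by
  have h1 : (∑ i ∈ Finset.range (s+1), (n.choose i : ℝ)) * y ^ s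
      = ∑ i ∈ Finset.range (s+1), (n.choose i : ℝ) * y ^ s := by rw [Finset.sum_mul]
  have h2 : ∑ i ∈ Finset.range (s+1), (n.choose i : ℝ) * y ^ s
      ≤ ∑ i ∈ Finset.range (s+1), (n.choose i : ℝ) * y ^ i := by
    apply Finset.sum_le_sum
    intro i hi
    have : y ^ s ≤ y ^ i :=
      pow_le_pow_of_le_one hy0.le hy1 (Nat.lt_succ_iff.mp (Finset.mem_range.mp hi))
    exact mul_le_mul_of_nonneg_left this (by positivity)
  have h3 : ∑ i ∈ Finset.range (s+1), (n.choose i : ℝ) * y ^ i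
      ≤ ∑ i ∈ Finset.range (max (s+1) (n+1)), (n.choose i : ℝ) * y ^ i := by
    apply Finset.sum_le_sum_of_subset_of_nonneg
    · exact Finset.range_subset_range.mpr (le_max_left _ _)
    · intro i _ _; positivity
  have h4 : ∑ i ∈ Finset.range (max (s+1) (n+1)), (n.choose i : ℝ) * y ^ i
      = ∑ i ∈ Finset.range (n+1), (n.choose i : ℝ) * y ^ i := by
    symm
    apply Finset.sum_subset (Finset.range_subset_range.mpr (le_max_right _ _))
    intro i _ hi
    have : n < i := by
      by_contra h
      exact hi (Finset.mem_range.mpr (by omega))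
    simp [Nat.choose_eq_zero_of_lt this]
  have h5 : (1 + y) ^ n = ∑ i ∈ Finset.range (n+1), (n.choose i : ℝ) * y ^ i := by
    rw [add_comm, add_pow]
    apply Finset.sum_congr rfl
    intro i _
    rw [one_pow]
    ring
  rw [h1, h5]
  calc _ ≤ _ := h2
    _ ≤ _ := h3
    _ = _ := h4

lemma trace_count {α : Type*} [DecidableEq α] (S : Finset α) (t : ℕ) (G : Finset (Finset α))
    (hsub : ∀ g ∈ G, g ⊆ S) (hint : ∀ g ∈ G, ∀ h ∈ G, g ≠ h → (g ∩ h).card ≤ t) :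
    G.card ≤ ∑ i ∈ Finset.range (t+2), S.card.choose i := by
  classical
  have hEx : ∀ g : Finset α, ¬ g.card ≤ t + 1 → ∃ e ⊆ g, e.card = t + 1 := by
    intro g hg
    exact Finset.exists_subset_card_eq (by omega)
  set f : Finset α → Finset α := fun g => if h : g.card ≤ t + 1 then g else (hEx g h).choose
    with hf
  have hfsub : ∀ g, f g ⊆ g := by
    intro g
    rw [hf]
    by_cases h : g.card ≤ t + 1
    · simp [h]
    · simp only [h, dif_neg, not_false_iff]
      exact (hEx g h).choose_spec.1
  have hfcard : ∀ g, f g = g ∨ (f g).card = t + 1 := by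
    intro g
    rw [hf]
    by_cases h : g.card ≤ t + 1
    · left; simp [h]
    · right; simp only [h, dif_neg, not_false_iff]
      exact (hEx g h).choose_spec.2
  have hfle : ∀ g, (f g).card ≤ t + 1 := by
    intro g
    rw [hf]
    by_cases h : g.card ≤ t + 1
    · simpa [h]
    · simp only [dif_neg h]
      exact le_of_eq (hEx g h).choose_spec.2
  apply le_trans (Finset.card_le_card_of_injOn f ?_ ?_)
  · -- card of target
    apply le_of_eq
    rw [Finset.card_biUnion]
    · apply Finset.sum_congr rfl
      intro i _
      exact Finset.card_powersetCard i S
    · intro i _ j _ hij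
      simp only [Finset.disjoint_left, Finset.mem_powersetCard]
      rintro a ⟨_, ha⟩ ⟨_, hb⟩
      exact hij (ha ▸ hb ▸ rfl)
  · -- membership
    intro g hg
    apply Finset.mem_biUnion.mpr
    refine ⟨(f g).card, Finset.mem_range.mpr (by have := hfle g; omega), ?_⟩
    exact Finset.mem_powersetCard.mpr ⟨(hfsub g).trans (hsub g hg), rfl⟩
  · -- injectivity
    intro g hg g' hg' heq
    by_contra hne
    have hcap : (f g).card ≤ t := by
      have h1 : f g ⊆ g ∩ g' := by
        apply Finset.subset_inter (hfsub g)
        rw [heq]; exact hfsub g'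
      exact le_trans (Finset.card_le_card h1) (hint g hg g' hg' hne)
    have hg1 : f g = g := by
      rcases hfcard g with h | h
      · exact h
      · omega
    have hg2 : f g' = g' := by
      rcases hfcard g' with h | h
      · exact h
      · rw [← heq] at h; omega
    exact hne (by rw [← hg1, heq, hg2])

lemma piece (p k t n : ℕ) (y : ℝ) (hylb : (1:ℝ)/1000 ≤ y) (hy1 : y ≤ 1)
    (htk : t ≤ k) (hn : n = 2 * (k - t)) (s : ℝ) (hs0 : 0 ≤ s)
    (hS : s * y ^ (t + 1) ≤ (1 + y) ^ n)
    (hcase :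
      (1 ≤ y * (1 + y) ^ 2 ∧
        (1 + y) ^ (2 * 128) ≤ (2.14799:ℝ) ^ 128 * (y * (1 + y) ^ 2) ^ p ∧ p * k ≤ 128 * t) ∨
      (y * (1 + y) ^ 2 ≤ 1 ∧
        (1 + y) ^ (2 * 128) ≤ (2.14799:ℝ) ^ 128 * (y * (1 + y) ^ 2) ^ (p + 1) ∧
        128 * t ≤ (p + 1) * k)) :
    s ≤ 1000 * (2.14799:ℝ) ^ k := by
  have hy0 : 0 < y := lt_of_lt_of_le (by norm_num) hylb
  have hA : 0 < 1 + y := by linarith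
  set w : ℝ := y * (1 + y) ^ 2 with hw
  have hw0 : 0 ≤ w := by positivity
  have hθ : (0:ℝ) < 2.14799 := by norm_num
  have key : (1 + y) ^ (2 * 128 * k) ≤ (2.14799:ℝ) ^ (128 * k) * w ^ (128 * t) := by
    rcases hcase with ⟨hw1, hnum, hpt⟩ | ⟨hw1, hnum, hpt⟩
    · calc (1 + y) ^ (2 * 128 * k) = ((1 + y) ^ (2 * 128)) ^ k := by rw [pow_mul]
        _ ≤ ((2.14799:ℝ) ^ 128 * w ^ p) ^ k := pow_le_pow_left₀ (by positivity) hnum k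
        _ = (2.14799:ℝ) ^ (128 * k) * w ^ (p * k) := by rw [mul_pow, ← pow_mul, ← pow_mul]
        _ ≤ (2.14799:ℝ) ^ (128 * k) * w ^ (128 * t) := by
            apply mul_le_mul_of_nonneg_left (pow_le_pow_right₀ hw1 hpt) (by positivity)
    · calc (1 + y) ^ (2 * 128 * k) = ((1 + y) ^ (2 * 128)) ^ k := by rw [pow_mul]
        _ ≤ ((2.14799:ℝ) ^ 128 * w ^ (p + 1)) ^ k := pow_le_pow_left₀ (by positivity) hnum k
        _ = (2.14799:ℝ) ^ (128 * k) * w ^ ((p + 1) * k) := by rw [mul_pow, ← pow_mul, ← pow_mul]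
        _ ≤ (2.14799:ℝ) ^ (128 * k) * w ^ (128 * t) := by
            apply mul_le_mul_of_nonneg_left (pow_le_pow_of_le_one hw0 hw1 hpt) (by positivity)
  have est : (1 + y) ^ (2 * (k - t)) ≤ (2.14799:ℝ) ^ k * y ^ t := by
    apply le_of_pow_le_pow_left₀ (n := 128) (by norm_num) (by positivity)
    have hcan : (0:ℝ) < (1 + y) ^ (2 * t * 128) := by positivity
    apply le_of_mul_le_mul_right ?_ hcan
    calc ((1 + y) ^ (2 * (k - t))) ^ 128 * (1 + y) ^ (2 * t * 128)
        = (1 + y) ^ (2 * (k - t) * 128 + 2 * t * 128) := by rw [← pow_mul, ← pow_add]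
      _ = (1 + y) ^ (2 * 128 * k) := by congr 1; omega
      _ ≤ (2.14799:ℝ) ^ (128 * k) * w ^ (128 * t) := key
      _ = ((2.14799:ℝ) ^ k * y ^ t) ^ 128 * (1 + y) ^ (2 * t * 128) := by
          rw [hw, mul_pow, ← pow_mul, mul_pow, ← pow_mul, ← pow_mul,
            Nat.mul_comm k 128, Nat.mul_comm t 128, show 2*t*128 = 2*(128*t) from by ring]
          ring
  -- combine
  have h1 : s * y ^ (t + 1) ≤ (2.14799:ℝ) ^ k * y ^ t := by
    calc s * y ^ (t + 1) ≤ (1 + y) ^ n := hS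
      _ = (1 + y) ^ (2 * (k - t)) := by rw [hn]
      _ ≤ _ := est
  have h2 : s * y ≤ (2.14799:ℝ) ^ k := by
    have hyt : (0:ℝ) < y ^ t := by positivity
    apply le_of_mul_le_mul_right ?_ hyt
    calc s * y * y ^ t = s * y ^ (t + 1) := by ring
      _ ≤ (2.14799:ℝ) ^ k * y ^ t := h1
  calc s = (s * (1/1000)) * 1000 := by ring
    _ ≤ (s * y) * 1000 := by
        apply mul_le_mul_of_nonneg_right (mul_le_mul_of_nonneg_left hylb hs0) (by norm_num)
    _ ≤ (2.14799:ℝ) ^ k * 1000 := by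
        apply mul_le_mul_of_nonneg_right h2 (by norm_num)
    _ = 1000 * (2.14799:ℝ) ^ k := by ring

/-- There is `K` such that for all `k ≥ K`: if `F` is a family of `k`-element finite sets
(over an arbitrary ground type) such that any four distinct members `A, B, C, D` satisfy
`(A ∆ B) ∩ (C ∆ D) ≠ ∅`, then `|F| ≤ 2.148^k`. -/
theorem intersecting_symmDiffs_upper_bound :
    ∃ K : ℕ, ∀ k : ℕ, K ≤ k →
      ∀ (α : Type*) [DecidableEq α] (F : Finset (Finset α)),
        (∀ A ∈ F, A.card = k) →
        (∀ A ∈ F, ∀ B ∈ F, ∀ C ∈ F, ∀ D ∈ F,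
          A ≠ B → A ≠ C → A ≠ D → B ≠ C → B ≠ D → C ≠ D →
          ((A ∆ B) ∩ (C ∆ D)).Nonempty) →
        (F.card : ℝ) ≤ (2.148 : ℝ) ^ k := by
  classical
  obtain ⟨K0, hK0⟩ := pow_unbounded_of_one_lt (1002 : ℝ)
    (show (1:ℝ) < 2.148/2.14799 by norm_num)
  refine ⟨max K0 1, ?_⟩
  intro k hk α _ F hcard hints
  have hk1 : 1 ≤ k := le_trans (le_max_right _ _) hk
  have hkK0 : K0 ≤ k := le_trans (le_max_left _ _) hk
  have hθ1 : (1:ℝ) ≤ 2.14799 ^ k := one_le_pow₀ (by norm_num)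
  have hfinal : ∀ s : ℝ, s ≤ 1002 * (2.14799:ℝ) ^ k → s ≤ (2.148:ℝ) ^ k := by
    intro s hs
    calc s ≤ 1002 * 2.14799 ^ k := hs
      _ ≤ (2.148/2.14799) ^ k * 2.14799 ^ k := by
          apply mul_le_mul_of_nonneg_right ?_ (by positivity)
          calc (1002:ℝ) ≤ (2.148/2.14799) ^ K0 := le_of_lt hK0
            _ ≤ (2.148/2.14799) ^ k := pow_le_pow_right₀ (by norm_num) hkK0
      _ = 2.148 ^ k := by rw [← mul_pow]; norm_num
  by_cases hF2 : F.card ≤ 1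
  · apply hfinal
    calc (F.card : ℝ) ≤ 1 := by exact_mod_cast hF2
      _ ≤ 1002 * 2.14799 ^ k := by nlinarith
  push_neg at hF2
  obtain ⟨C0, hC0, D0, hD0, hCD0⟩ := Finset.one_lt_card.mp hF2
  set P := (F ×ˢ F).filter (fun q => q.1 ≠ q.2) with hP
  have hPne : P.Nonempty :=
    ⟨(C0, D0), by simp [hP, Finset.mem_filter, Finset.mem_product, hC0, hD0, hCD0]⟩
  obtain ⟨⟨C, D⟩, hCDmem, hsup⟩ := Finset.exists_mem_eq_sup P hPne (fun q => (q.1 ∩ q.2).card)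
  set t := P.sup (fun q => (q.1 ∩ q.2).card) with ht
  have hCDmem' : (C ∈ F ∧ D ∈ F) ∧ C ≠ D := by
    simpa [hP, Finset.mem_filter, Finset.mem_product] using hCDmem
  obtain ⟨⟨hC, hD⟩, hCD⟩ := hCDmem'
  have htmax : ∀ X ∈ F, ∀ Y ∈ F, X ≠ Y → (X ∩ Y).card ≤ t := by
    intro X hX Y hY hXY
    have hmem : (X, Y) ∈ P := by
      rw [hP, Finset.mem_filter, Finset.mem_product]
      exact ⟨⟨hX, hY⟩, hXY⟩
    rw [ht]
    exact Finset.le_sup (f := fun q : Finset α × Finset α => (q.1 ∩ q.2).card) hmem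
  have htval : (C ∩ D).card = t := hsup.symm
  set S := C ∆ D with hSdef
  have hCk : C.card = k := hcard C hC
  have hDk : D.card = k := hcard D hD
  have hC1 : (C ∩ D).card + (C \ D).card = k := by rw [← hCk]; exact Finset.card_inter_add_card_sdiff C D
  have hD1 : (D ∩ C).card + (D \ C).card = k := by rw [← hDk]; exact Finset.card_inter_add_card_sdiff D C
  have hDC : (D ∩ C).card = t := by rw [Finset.inter_comm]; exact htval
  have hSn : S.card + 2 * t = 2 * k := by
    have hs : S = (C \ D) ∪ (D \ C) := by rw [hSdef, symmDiff_def, Finset.sup_eq_union]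
    have hdisj : Disjoint (C \ D) (D \ C) := disjoint_sdiff_sdiff
    rw [hs, Finset.card_union_of_disjoint hdisj]
    omega
  have htlt : t < k := by
    rcases Nat.lt_or_ge t k with h | h
    · exact h
    · exfalso
      have hsub : C ∩ D ⊆ C := Finset.inter_subset_left
      have : C ∩ D = C := Finset.eq_of_subset_of_card_le hsub (by omega)
      have hCD' : C ⊆ D := by rw [← this]; exact Finset.inter_subset_right
      exact hCD (Finset.eq_of_subset_of_card_le hCD' (by omega))
  have htk : t ≤ k := le_of_lt htlt
  set G := ((F.erase C).erase D).image (fun X => X ∩ S) with hG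
  have hDeC : D ∈ F.erase C := Finset.mem_erase.mpr ⟨fun h => hCD h.symm, hD⟩
  have hinj : Set.InjOn (fun X => X ∩ S) ((F.erase C).erase D) := by
    intro X hX Y hY hXY
    by_contra hne
    have hXY' : X ∩ S = Y ∩ S := hXY
    have hX' : X ≠ D ∧ X ≠ C ∧ X ∈ F := by
      have := Finset.mem_coe.mp hX
      rw [Finset.mem_erase, Finset.mem_erase] at this
      tauto
    have hY' : Y ≠ D ∧ Y ≠ C ∧ Y ∈ F := by
      have := Finset.mem_coe.mp hY
      rw [Finset.mem_erase, Finset.mem_erase] at this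
      tauto
    obtain ⟨a, ha⟩ := hints X hX'.2.2 Y hY'.2.2 C hC D hD hne hX'.2.1 hX'.1 hY'.2.1 hY'.1 hCD
    rw [Finset.mem_inter] at ha
    have ha1 := Finset.mem_symmDiff.mp ha.1
    have ha2 : a ∈ S := ha.2
    have hiff : a ∈ X ∩ S ↔ a ∈ Y ∩ S := by
      constructor <;> intro h
      · rw [← hXY']; exact h
      · rw [hXY']; exact h
    rw [Finset.mem_inter, Finset.mem_inter] at hiff
    rcases ha1 with ⟨h1, h2⟩ | ⟨h1, h2⟩
    · exact h2 (hiff.mp ⟨h1, ha2⟩).1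
    · exact h2 (hiff.mpr ⟨h1, ha2⟩).1
  have hGcard : G.card = F.card - 2 := by
    rw [hG, Finset.card_image_of_injOn hinj, Finset.card_erase_of_mem hDeC,
      Finset.card_erase_of_mem hC]
    omega
  have hGsub : ∀ g ∈ G, g ⊆ S := by
    intro g hg
    obtain ⟨X, _, rfl⟩ := Finset.mem_image.mp hg
    exact Finset.inter_subset_right
  have hGint : ∀ g ∈ G, ∀ g' ∈ G, g ≠ g' → (g ∩ g').card ≤ t := by
    intro g hg g' hg' hne
    obtain ⟨X, hXmem, rfl⟩ := Finset.mem_image.mp hg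
    obtain ⟨Y, hYmem, rfl⟩ := Finset.mem_image.mp hg'
    have hXY : X ≠ Y := by rintro rfl; exact hne rfl
    have hXF : X ∈ F := Finset.mem_of_mem_erase (Finset.mem_of_mem_erase hXmem)
    have hYF : Y ∈ F := Finset.mem_of_mem_erase (Finset.mem_of_mem_erase hYmem)
    calc (X ∩ S ∩ (Y ∩ S)).card ≤ (X ∩ Y).card := by
          apply Finset.card_le_card
          intro a haa
          simp only [Finset.mem_inter] at haa ⊢
          tauto
      _ ≤ t := htmax X hXF Y hYF hXY
  have hcount := trace_count S t G hGsub hGint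
  set n := S.card with hndef
  have hn : n = 2 * (k - t) := by omega
  set Sr : ℝ := ∑ i ∈ Finset.range (t + 2), (n.choose i : ℝ) with hSr
  have hS0 : (0:ℝ) ≤ Sr := by positivity
  have hGr : (G.card : ℝ) ≤ Sr := by
    rw [hSr]
    push_cast
    exact_mod_cast hcount
  have hSum : ∀ y : ℝ, 0 < y → y ≤ 1 → Sr * y ^ (t + 1) ≤ (1 + y) ^ n := by
    intro y hy0 hy1
    exact sum_choose_le n (t + 1) y hy0 hy1
  set p := 128 * t / k with hp
  have hk0 : 0 < k := hk1
  have hp1 : p * k ≤ 128 * t := Nat.div_mul_le_self _ _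
  have hp2 : 128 * t < (p + 1) * k := by
    rw [hp]
    exact (Nat.div_lt_iff_lt_mul hk0).mp (Nat.lt_succ_self _)
  have hpQ : p < 128 := by
    rw [hp]
    apply Nat.div_lt_of_lt_mul
    omega
  clear_value p
  clear hp
  have hkey : Sr ≤ 1000 * (2.14799:ℝ) ^ k := by
    interval_cases p
    · exact piece 0 k t n (1/1000 : ℝ) (by norm_num) (by norm_num) htk hn Sr hS0
        (hSum (1/1000 : ℝ) (by norm_num) (by norm_num)) (Or.inr ⟨by norm_num, by norm_num, le_of_lt hp2⟩)
    · exact piece 1 k t n (1/1000 : ℝ) (by norm_num) (by norm_num) htk hn Sr hS0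
        (hSum (1/1000 : ℝ) (by norm_num) (by norm_num)) (Or.inr ⟨by norm_num, by norm_num, le_of_lt hp2⟩)
    · exact piece 2 k t n (1/1000 : ℝ) (by norm_num) (by norm_num) htk hn Sr hS0
        (hSum (1/1000 : ℝ) (by norm_num) (by norm_num)) (Or.inr ⟨by norm_num, by norm_num, le_of_lt hp2⟩)
    · exact piece 3 k t n (1/1000 : ℝ) (by norm_num) (by norm_num) htk hn Sr hS0
        (hSum (1/1000 : ℝ) (by norm_num) (by norm_num)) (Or.inr ⟨by norm_num, by norm_num, le_of_lt hp2⟩)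
    · exact piece 4 k t n (1/500 : ℝ) (by norm_num) (by norm_num) htk hn Sr hS0
        (hSum (1/500 : ℝ) (by norm_num) (by norm_num)) (Or.inr ⟨by norm_num, by norm_num, le_of_lt hp2⟩)
    · exact piece 5 k t n (1/500 : ℝ) (by norm_num) (by norm_num) htk hn Sr hS0
        (hSum (1/500 : ℝ) (by norm_num) (by norm_num)) (Or.inr ⟨by norm_num, by norm_num, le_of_lt hp2⟩)
    · exact piece 6 k t n (1/500 : ℝ) (by norm_num) (by norm_num) htk hn Sr hS0
        (hSum (1/500 : ℝ) (by norm_num) (by norm_num)) (Or.inr ⟨by norm_num, by norm_num, le_of_lt hp2⟩)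
    · exact piece 7 k t n (1/500 : ℝ) (by norm_num) (by norm_num) htk hn Sr hS0
        (hSum (1/500 : ℝ) (by norm_num) (by norm_num)) (Or.inr ⟨by norm_num, by norm_num, le_of_lt hp2⟩)
    · exact piece 8 k t n (1/200 : ℝ) (by norm_num) (by norm_num) htk hn Sr hS0
        (hSum (1/200 : ℝ) (by norm_num) (by norm_num)) (Or.inr ⟨by norm_num, by norm_num, le_of_lt hp2⟩)
    · exact piece 9 k t n (1/200 : ℝ) (by norm_num) (by norm_num) htk hn Sr hS0
        (hSum (1/200 : ℝ) (by norm_num) (by norm_num)) (Or.inr ⟨by norm_num, by norm_num, le_of_lt hp2⟩)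
    · exact piece 10 k t n (1/200 : ℝ) (by norm_num) (by norm_num) htk hn Sr hS0
        (hSum (1/200 : ℝ) (by norm_num) (by norm_num)) (Or.inr ⟨by norm_num, by norm_num, le_of_lt hp2⟩)
    · exact piece 11 k t n (1/200 : ℝ) (by norm_num) (by norm_num) htk hn Sr hS0
        (hSum (1/200 : ℝ) (by norm_num) (by norm_num)) (Or.inr ⟨by norm_num, by norm_num, le_of_lt hp2⟩)
    · exact piece 12 k t n (1/200 : ℝ) (by norm_num) (by norm_num) htk hn Sr hS0
        (hSum (1/200 : ℝ) (by norm_num) (by norm_num)) (Or.inr ⟨by norm_num, by norm_num, le_of_lt hp2⟩)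
    · exact piece 13 k t n (1/200 : ℝ) (by norm_num) (by norm_num) htk hn Sr hS0
        (hSum (1/200 : ℝ) (by norm_num) (by norm_num)) (Or.inr ⟨by norm_num, by norm_num, le_of_lt hp2⟩)
    · exact piece 14 k t n (1/200 : ℝ) (by norm_num) (by norm_num) htk hn Sr hS0
        (hSum (1/200 : ℝ) (by norm_num) (by norm_num)) (Or.inr ⟨by norm_num, by norm_num, le_of_lt hp2⟩)
    · exact piece 15 k t n (1/200 : ℝ) (by norm_num) (by norm_num) htk hn Sr hS0
        (hSum (1/200 : ℝ) (by norm_num) (by norm_num)) (Or.inr ⟨by norm_num, by norm_num, le_of_lt hp2⟩)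
    · exact piece 16 k t n (1/200 : ℝ) (by norm_num) (by norm_num) htk hn Sr hS0
        (hSum (1/200 : ℝ) (by norm_num) (by norm_num)) (Or.inr ⟨by norm_num, by norm_num, le_of_lt hp2⟩)
    · exact piece 17 k t n (1/100 : ℝ) (by norm_num) (by norm_num) htk hn Sr hS0
        (hSum (1/100 : ℝ) (by norm_num) (by norm_num)) (Or.inr ⟨by norm_num, by norm_num, le_of_lt hp2⟩)
    · exact piece 18 k t n (1/100 : ℝ) (by norm_num) (by norm_num) htk hn Sr hS0
        (hSum (1/100 : ℝ) (by norm_num) (by norm_num)) (Or.inr ⟨by norm_num, by norm_num, le_of_lt hp2⟩)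
    · exact piece 19 k t n (1/100 : ℝ) (by norm_num) (by norm_num) htk hn Sr hS0
        (hSum (1/100 : ℝ) (by norm_num) (by norm_num)) (Or.inr ⟨by norm_num, by norm_num, le_of_lt hp2⟩)
    · exact piece 20 k t n (1/50 : ℝ) (by norm_num) (by norm_num) htk hn Sr hS0
        (hSum (1/50 : ℝ) (by norm_num) (by norm_num)) (Or.inr ⟨by norm_num, by norm_num, le_of_lt hp2⟩)
    · exact piece 21 k t n (1/50 : ℝ) (by norm_num) (by norm_num) htk hn Sr hS0
        (hSum (1/50 : ℝ) (by norm_num) (by norm_num)) (Or.inr ⟨by norm_num, by norm_num, le_of_lt hp2⟩)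
    · exact piece 22 k t n (1/50 : ℝ) (by norm_num) (by norm_num) htk hn Sr hS0
        (hSum (1/50 : ℝ) (by norm_num) (by norm_num)) (Or.inr ⟨by norm_num, by norm_num, le_of_lt hp2⟩)
    · exact piece 23 k t n (3/100 : ℝ) (by norm_num) (by norm_num) htk hn Sr hS0
        (hSum (3/100 : ℝ) (by norm_num) (by norm_num)) (Or.inr ⟨by norm_num, by norm_num, le_of_lt hp2⟩)
    · exact piece 24 k t n (3/100 : ℝ) (by norm_num) (by norm_num) htk hn Sr hS0
        (hSum (3/100 : ℝ) (by norm_num) (by norm_num)) (Or.inr ⟨by norm_num, by norm_num, le_of_lt hp2⟩)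
    · exact piece 25 k t n (3/100 : ℝ) (by norm_num) (by norm_num) htk hn Sr hS0
        (hSum (3/100 : ℝ) (by norm_num) (by norm_num)) (Or.inr ⟨by norm_num, by norm_num, le_of_lt hp2⟩)
    · exact piece 26 k t n (1/25 : ℝ) (by norm_num) (by norm_num) htk hn Sr hS0
        (hSum (1/25 : ℝ) (by norm_num) (by norm_num)) (Or.inr ⟨by norm_num, by norm_num, le_of_lt hp2⟩)
    · exact piece 27 k t n (1/20 : ℝ) (by norm_num) (by norm_num) htk hn Sr hS0
        (hSum (1/20 : ℝ) (by norm_num) (by norm_num)) (Or.inr ⟨by norm_num, by norm_num, le_of_lt hp2⟩)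
    · exact piece 28 k t n (1/20 : ℝ) (by norm_num) (by norm_num) htk hn Sr hS0
        (hSum (1/20 : ℝ) (by norm_num) (by norm_num)) (Or.inr ⟨by norm_num, by norm_num, le_of_lt hp2⟩)
    · exact piece 29 k t n (3/50 : ℝ) (by norm_num) (by norm_num) htk hn Sr hS0
        (hSum (3/50 : ℝ) (by norm_num) (by norm_num)) (Or.inr ⟨by norm_num, by norm_num, le_of_lt hp2⟩)
    · exact piece 30 k t n (7/100 : ℝ) (by norm_num) (by norm_num) htk hn Sr hS0
        (hSum (7/100 : ℝ) (by norm_num) (by norm_num)) (Or.inr ⟨by norm_num, by norm_num, le_of_lt hp2⟩)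
    · exact piece 31 k t n (2/25 : ℝ) (by norm_num) (by norm_num) htk hn Sr hS0
        (hSum (2/25 : ℝ) (by norm_num) (by norm_num)) (Or.inr ⟨by norm_num, by norm_num, le_of_lt hp2⟩)
    · exact piece 32 k t n (9/100 : ℝ) (by norm_num) (by norm_num) htk hn Sr hS0
        (hSum (9/100 : ℝ) (by norm_num) (by norm_num)) (Or.inr ⟨by norm_num, by norm_num, le_of_lt hp2⟩)
    · exact piece 33 k t n (1/10 : ℝ) (by norm_num) (by norm_num) htk hn Sr hS0
        (hSum (1/10 : ℝ) (by norm_num) (by norm_num)) (Or.inr ⟨by norm_num, by norm_num, le_of_lt hp2⟩)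
    · exact piece 34 k t n (11/100 : ℝ) (by norm_num) (by norm_num) htk hn Sr hS0
        (hSum (11/100 : ℝ) (by norm_num) (by norm_num)) (Or.inr ⟨by norm_num, by norm_num, le_of_lt hp2⟩)
    · exact piece 35 k t n (3/25 : ℝ) (by norm_num) (by norm_num) htk hn Sr hS0
        (hSum (3/25 : ℝ) (by norm_num) (by norm_num)) (Or.inr ⟨by norm_num, by norm_num, le_of_lt hp2⟩)
    · exact piece 36 k t n (13/100 : ℝ) (by norm_num) (by norm_num) htk hn Sr hS0
        (hSum (13/100 : ℝ) (by norm_num) (by norm_num)) (Or.inr ⟨by norm_num, by norm_num, le_of_lt hp2⟩)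
    · exact piece 37 k t n (3/20 : ℝ) (by norm_num) (by norm_num) htk hn Sr hS0
        (hSum (3/20 : ℝ) (by norm_num) (by norm_num)) (Or.inr ⟨by norm_num, by norm_num, le_of_lt hp2⟩)
    · exact piece 38 k t n (17/100 : ℝ) (by norm_num) (by norm_num) htk hn Sr hS0
        (hSum (17/100 : ℝ) (by norm_num) (by norm_num)) (Or.inr ⟨by norm_num, by norm_num, le_of_lt hp2⟩)
    · exact piece 39 k t n (9/50 : ℝ) (by norm_num) (by norm_num) htk hn Sr hS0
        (hSum (9/50 : ℝ) (by norm_num) (by norm_num)) (Or.inr ⟨by norm_num, by norm_num, le_of_lt hp2⟩)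
    · exact piece 40 k t n (1/5 : ℝ) (by norm_num) (by norm_num) htk hn Sr hS0
        (hSum (1/5 : ℝ) (by norm_num) (by norm_num)) (Or.inr ⟨by norm_num, by norm_num, le_of_lt hp2⟩)
    · exact piece 41 k t n (11/50 : ℝ) (by norm_num) (by norm_num) htk hn Sr hS0
        (hSum (11/50 : ℝ) (by norm_num) (by norm_num)) (Or.inr ⟨by norm_num, by norm_num, le_of_lt hp2⟩)
    · exact piece 42 k t n (1/4 : ℝ) (by norm_num) (by norm_num) htk hn Sr hS0
        (hSum (1/4 : ℝ) (by norm_num) (by norm_num)) (Or.inr ⟨by norm_num, by norm_num, le_of_lt hp2⟩)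
    · exact piece 43 k t n (27/100 : ℝ) (by norm_num) (by norm_num) htk hn Sr hS0
        (hSum (27/100 : ℝ) (by norm_num) (by norm_num)) (Or.inr ⟨by norm_num, by norm_num, le_of_lt hp2⟩)
    · exact piece 44 k t n (59/200 : ℝ) (by norm_num) (by norm_num) htk hn Sr hS0
        (hSum (59/200 : ℝ) (by norm_num) (by norm_num)) (Or.inr ⟨by norm_num, by norm_num, le_of_lt hp2⟩)
    · exact piece 45 k t n (13/40 : ℝ) (by norm_num) (by norm_num) htk hn Sr hS0
        (hSum (13/40 : ℝ) (by norm_num) (by norm_num)) (Or.inr ⟨by norm_num, by norm_num, le_of_lt hp2⟩)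
    · exact piece 46 k t n (9/25 : ℝ) (by norm_num) (by norm_num) htk hn Sr hS0
        (hSum (9/25 : ℝ) (by norm_num) (by norm_num)) (Or.inr ⟨by norm_num, by norm_num, le_of_lt hp2⟩)
    · exact piece 47 k t n (197/500 : ℝ) (by norm_num) (by norm_num) htk hn Sr hS0
        (hSum (197/500 : ℝ) (by norm_num) (by norm_num)) (Or.inr ⟨by norm_num, by norm_num, le_of_lt hp2⟩)
    · exact piece 48 k t n (433/1000 : ℝ) (by norm_num) (by norm_num) htk hn Sr hS0
        (hSum (433/1000 : ℝ) (by norm_num) (by norm_num)) (Or.inr ⟨by norm_num, by norm_num, le_of_lt hp2⟩)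
    · exact piece 49 k t n (231/500 : ℝ) (by norm_num) (by norm_num) htk hn Sr hS0
        (hSum (231/500 : ℝ) (by norm_num) (by norm_num)) (Or.inr ⟨by norm_num, by norm_num, le_of_lt hp2⟩)
    · exact piece 50 k t n (93/200 : ℝ) (by norm_num) (by norm_num) htk hn Sr hS0
        (hSum (93/200 : ℝ) (by norm_num) (by norm_num)) (Or.inr ⟨by norm_num, by norm_num, le_of_lt hp2⟩)
    · exact piece 51 k t n (93/200 : ℝ) (by norm_num) (by norm_num) htk hn Sr hS0
        (hSum (93/200 : ℝ) (by norm_num) (by norm_num)) (Or.inr ⟨by norm_num, by norm_num, le_of_lt hp2⟩)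
    · exact piece 52 k t n (47/100 : ℝ) (by norm_num) (by norm_num) htk hn Sr hS0
        (hSum (47/100 : ℝ) (by norm_num) (by norm_num)) (Or.inl ⟨by norm_num, by norm_num, hp1⟩)
    · exact piece 53 k t n (47/100 : ℝ) (by norm_num) (by norm_num) htk hn Sr hS0
        (hSum (47/100 : ℝ) (by norm_num) (by norm_num)) (Or.inl ⟨by norm_num, by norm_num, hp1⟩)
    · exact piece 54 k t n (47/100 : ℝ) (by norm_num) (by norm_num) htk hn Sr hS0
        (hSum (47/100 : ℝ) (by norm_num) (by norm_num)) (Or.inl ⟨by norm_num, by norm_num, hp1⟩)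
    · exact piece 55 k t n (47/100 : ℝ) (by norm_num) (by norm_num) htk hn Sr hS0
        (hSum (47/100 : ℝ) (by norm_num) (by norm_num)) (Or.inl ⟨by norm_num, by norm_num, hp1⟩)
    · exact piece 56 k t n (1/2 : ℝ) (by norm_num) (by norm_num) htk hn Sr hS0
        (hSum (1/2 : ℝ) (by norm_num) (by norm_num)) (Or.inl ⟨by norm_num, by norm_num, hp1⟩)
    · exact piece 57 k t n (27/50 : ℝ) (by norm_num) (by norm_num) htk hn Sr hS0
        (hSum (27/50 : ℝ) (by norm_num) (by norm_num)) (Or.inl ⟨by norm_num, by norm_num, hp1⟩)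
    · exact piece 58 k t n (29/50 : ℝ) (by norm_num) (by norm_num) htk hn Sr hS0
        (hSum (29/50 : ℝ) (by norm_num) (by norm_num)) (Or.inl ⟨by norm_num, by norm_num, hp1⟩)
    · exact piece 59 k t n (31/50 : ℝ) (by norm_num) (by norm_num) htk hn Sr hS0
        (hSum (31/50 : ℝ) (by norm_num) (by norm_num)) (Or.inl ⟨by norm_num, by norm_num, hp1⟩)
    · exact piece 60 k t n (33/50 : ℝ) (by norm_num) (by norm_num) htk hn Sr hS0
        (hSum (33/50 : ℝ) (by norm_num) (by norm_num)) (Or.inl ⟨by norm_num, by norm_num, hp1⟩)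
    · exact piece 61 k t n (71/100 : ℝ) (by norm_num) (by norm_num) htk hn Sr hS0
        (hSum (71/100 : ℝ) (by norm_num) (by norm_num)) (Or.inl ⟨by norm_num, by norm_num, hp1⟩)
    · exact piece 62 k t n (19/25 : ℝ) (by norm_num) (by norm_num) htk hn Sr hS0
        (hSum (19/25 : ℝ) (by norm_num) (by norm_num)) (Or.inl ⟨by norm_num, by norm_num, hp1⟩)
    · exact piece 63 k t n (41/50 : ℝ) (by norm_num) (by norm_num) htk hn Sr hS0
        (hSum (41/50 : ℝ) (by norm_num) (by norm_num)) (Or.inl ⟨by norm_num, by norm_num, hp1⟩)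
    · exact piece 64 k t n (17/20 : ℝ) (by norm_num) (by norm_num) htk hn Sr hS0
        (hSum (17/20 : ℝ) (by norm_num) (by norm_num)) (Or.inl ⟨by norm_num, by norm_num, hp1⟩)
    · exact piece 65 k t n (17/20 : ℝ) (by norm_num) (by norm_num) htk hn Sr hS0
        (hSum (17/20 : ℝ) (by norm_num) (by norm_num)) (Or.inl ⟨by norm_num, by norm_num, hp1⟩)
    · exact piece 66 k t n (17/20 : ℝ) (by norm_num) (by norm_num) htk hn Sr hS0
        (hSum (17/20 : ℝ) (by norm_num) (by norm_num)) (Or.inl ⟨by norm_num, by norm_num, hp1⟩)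
    · exact piece 67 k t n (17/20 : ℝ) (by norm_num) (by norm_num) htk hn Sr hS0
        (hSum (17/20 : ℝ) (by norm_num) (by norm_num)) (Or.inl ⟨by norm_num, by norm_num, hp1⟩)
    · exact piece 68 k t n (17/20 : ℝ) (by norm_num) (by norm_num) htk hn Sr hS0
        (hSum (17/20 : ℝ) (by norm_num) (by norm_num)) (Or.inl ⟨by norm_num, by norm_num, hp1⟩)
    · exact piece 69 k t n (17/20 : ℝ) (by norm_num) (by norm_num) htk hn Sr hS0
        (hSum (17/20 : ℝ) (by norm_num) (by norm_num)) (Or.inl ⟨by norm_num, by norm_num, hp1⟩)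
    · exact piece 70 k t n (17/20 : ℝ) (by norm_num) (by norm_num) htk hn Sr hS0
        (hSum (17/20 : ℝ) (by norm_num) (by norm_num)) (Or.inl ⟨by norm_num, by norm_num, hp1⟩)
    · exact piece 71 k t n (17/20 : ℝ) (by norm_num) (by norm_num) htk hn Sr hS0
        (hSum (17/20 : ℝ) (by norm_num) (by norm_num)) (Or.inl ⟨by norm_num, by norm_num, hp1⟩)
    · exact piece 72 k t n (17/20 : ℝ) (by norm_num) (by norm_num) htk hn Sr hS0
        (hSum (17/20 : ℝ) (by norm_num) (by norm_num)) (Or.inl ⟨by norm_num, by norm_num, hp1⟩)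
    · exact piece 73 k t n (17/20 : ℝ) (by norm_num) (by norm_num) htk hn Sr hS0
        (hSum (17/20 : ℝ) (by norm_num) (by norm_num)) (Or.inl ⟨by norm_num, by norm_num, hp1⟩)
    · exact piece 74 k t n (17/20 : ℝ) (by norm_num) (by norm_num) htk hn Sr hS0
        (hSum (17/20 : ℝ) (by norm_num) (by norm_num)) (Or.inl ⟨by norm_num, by norm_num, hp1⟩)
    · exact piece 75 k t n (17/20 : ℝ) (by norm_num) (by norm_num) htk hn Sr hS0
        (hSum (17/20 : ℝ) (by norm_num) (by norm_num)) (Or.inl ⟨by norm_num, by norm_num, hp1⟩)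
    · exact piece 76 k t n (17/20 : ℝ) (by norm_num) (by norm_num) htk hn Sr hS0
        (hSum (17/20 : ℝ) (by norm_num) (by norm_num)) (Or.inl ⟨by norm_num, by norm_num, hp1⟩)
    · exact piece 77 k t n (17/20 : ℝ) (by norm_num) (by norm_num) htk hn Sr hS0
        (hSum (17/20 : ℝ) (by norm_num) (by norm_num)) (Or.inl ⟨by norm_num, by norm_num, hp1⟩)
    · exact piece 78 k t n (17/20 : ℝ) (by norm_num) (by norm_num) htk hn Sr hS0
        (hSum (17/20 : ℝ) (by norm_num) (by norm_num)) (Or.inl ⟨by norm_num, by norm_num, hp1⟩)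
    · exact piece 79 k t n (17/20 : ℝ) (by norm_num) (by norm_num) htk hn Sr hS0
        (hSum (17/20 : ℝ) (by norm_num) (by norm_num)) (Or.inl ⟨by norm_num, by norm_num, hp1⟩)
    · exact piece 80 k t n (17/20 : ℝ) (by norm_num) (by norm_num) htk hn Sr hS0
        (hSum (17/20 : ℝ) (by norm_num) (by norm_num)) (Or.inl ⟨by norm_num, by norm_num, hp1⟩)
    · exact piece 81 k t n (17/20 : ℝ) (by norm_num) (by norm_num) htk hn Sr hS0
        (hSum (17/20 : ℝ) (by norm_num) (by norm_num)) (Or.inl ⟨by norm_num, by norm_num, hp1⟩)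
    · exact piece 82 k t n (17/20 : ℝ) (by norm_num) (by norm_num) htk hn Sr hS0
        (hSum (17/20 : ℝ) (by norm_num) (by norm_num)) (Or.inl ⟨by norm_num, by norm_num, hp1⟩)
    · exact piece 83 k t n (17/20 : ℝ) (by norm_num) (by norm_num) htk hn Sr hS0
        (hSum (17/20 : ℝ) (by norm_num) (by norm_num)) (Or.inl ⟨by norm_num, by norm_num, hp1⟩)
    · exact piece 84 k t n (17/20 : ℝ) (by norm_num) (by norm_num) htk hn Sr hS0
        (hSum (17/20 : ℝ) (by norm_num) (by norm_num)) (Or.inl ⟨by norm_num, by norm_num, hp1⟩)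
    · exact piece 85 k t n (17/20 : ℝ) (by norm_num) (by norm_num) htk hn Sr hS0
        (hSum (17/20 : ℝ) (by norm_num) (by norm_num)) (Or.inl ⟨by norm_num, by norm_num, hp1⟩)
    · exact piece 86 k t n (17/20 : ℝ) (by norm_num) (by norm_num) htk hn Sr hS0
        (hSum (17/20 : ℝ) (by norm_num) (by norm_num)) (Or.inl ⟨by norm_num, by norm_num, hp1⟩)
    · exact piece 87 k t n (17/20 : ℝ) (by norm_num) (by norm_num) htk hn Sr hS0
        (hSum (17/20 : ℝ) (by norm_num) (by norm_num)) (Or.inl ⟨by norm_num, by norm_num, hp1⟩)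
    · exact piece 88 k t n (17/20 : ℝ) (by norm_num) (by norm_num) htk hn Sr hS0
        (hSum (17/20 : ℝ) (by norm_num) (by norm_num)) (Or.inl ⟨by norm_num, by norm_num, hp1⟩)
    · exact piece 89 k t n (17/20 : ℝ) (by norm_num) (by norm_num) htk hn Sr hS0
        (hSum (17/20 : ℝ) (by norm_num) (by norm_num)) (Or.inl ⟨by norm_num, by norm_num, hp1⟩)
    · exact piece 90 k t n (17/20 : ℝ) (by norm_num) (by norm_num) htk hn Sr hS0
        (hSum (17/20 : ℝ) (by norm_num) (by norm_num)) (Or.inl ⟨by norm_num, by norm_num, hp1⟩)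
    · exact piece 91 k t n (17/20 : ℝ) (by norm_num) (by norm_num) htk hn Sr hS0
        (hSum (17/20 : ℝ) (by norm_num) (by norm_num)) (Or.inl ⟨by norm_num, by norm_num, hp1⟩)
    · exact piece 92 k t n (17/20 : ℝ) (by norm_num) (by norm_num) htk hn Sr hS0
        (hSum (17/20 : ℝ) (by norm_num) (by norm_num)) (Or.inl ⟨by norm_num, by norm_num, hp1⟩)
    · exact piece 93 k t n (17/20 : ℝ) (by norm_num) (by norm_num) htk hn Sr hS0
        (hSum (17/20 : ℝ) (by norm_num) (by norm_num)) (Or.inl ⟨by norm_num, by norm_num, hp1⟩)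
    · exact piece 94 k t n (17/20 : ℝ) (by norm_num) (by norm_num) htk hn Sr hS0
        (hSum (17/20 : ℝ) (by norm_num) (by norm_num)) (Or.inl ⟨by norm_num, by norm_num, hp1⟩)
    · exact piece 95 k t n (17/20 : ℝ) (by norm_num) (by norm_num) htk hn Sr hS0
        (hSum (17/20 : ℝ) (by norm_num) (by norm_num)) (Or.inl ⟨by norm_num, by norm_num, hp1⟩)
    · exact piece 96 k t n (17/20 : ℝ) (by norm_num) (by norm_num) htk hn Sr hS0
        (hSum (17/20 : ℝ) (by norm_num) (by norm_num)) (Or.inl ⟨by norm_num, by norm_num, hp1⟩)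
    · exact piece 97 k t n (17/20 : ℝ) (by norm_num) (by norm_num) htk hn Sr hS0
        (hSum (17/20 : ℝ) (by norm_num) (by norm_num)) (Or.inl ⟨by norm_num, by norm_num, hp1⟩)
    · exact piece 98 k t n (17/20 : ℝ) (by norm_num) (by norm_num) htk hn Sr hS0
        (hSum (17/20 : ℝ) (by norm_num) (by norm_num)) (Or.inl ⟨by norm_num, by norm_num, hp1⟩)
    · exact piece 99 k t n (17/20 : ℝ) (by norm_num) (by norm_num) htk hn Sr hS0
        (hSum (17/20 : ℝ) (by norm_num) (by norm_num)) (Or.inl ⟨by norm_num, by norm_num, hp1⟩)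
    · exact piece 100 k t n (17/20 : ℝ) (by norm_num) (by norm_num) htk hn Sr hS0
        (hSum (17/20 : ℝ) (by norm_num) (by norm_num)) (Or.inl ⟨by norm_num, by norm_num, hp1⟩)
    · exact piece 101 k t n (17/20 : ℝ) (by norm_num) (by norm_num) htk hn Sr hS0
        (hSum (17/20 : ℝ) (by norm_num) (by norm_num)) (Or.inl ⟨by norm_num, by norm_num, hp1⟩)
    · exact piece 102 k t n (17/20 : ℝ) (by norm_num) (by norm_num) htk hn Sr hS0
        (hSum (17/20 : ℝ) (by norm_num) (by norm_num)) (Or.inl ⟨by norm_num, by norm_num, hp1⟩)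
    · exact piece 103 k t n (17/20 : ℝ) (by norm_num) (by norm_num) htk hn Sr hS0
        (hSum (17/20 : ℝ) (by norm_num) (by norm_num)) (Or.inl ⟨by norm_num, by norm_num, hp1⟩)
    · exact piece 104 k t n (17/20 : ℝ) (by norm_num) (by norm_num) htk hn Sr hS0
        (hSum (17/20 : ℝ) (by norm_num) (by norm_num)) (Or.inl ⟨by norm_num, by norm_num, hp1⟩)
    · exact piece 105 k t n (17/20 : ℝ) (by norm_num) (by norm_num) htk hn Sr hS0
        (hSum (17/20 : ℝ) (by norm_num) (by norm_num)) (Or.inl ⟨by norm_num, by norm_num, hp1⟩)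
    · exact piece 106 k t n (17/20 : ℝ) (by norm_num) (by norm_num) htk hn Sr hS0
        (hSum (17/20 : ℝ) (by norm_num) (by norm_num)) (Or.inl ⟨by norm_num, by norm_num, hp1⟩)
    · exact piece 107 k t n (17/20 : ℝ) (by norm_num) (by norm_num) htk hn Sr hS0
        (hSum (17/20 : ℝ) (by norm_num) (by norm_num)) (Or.inl ⟨by norm_num, by norm_num, hp1⟩)
    · exact piece 108 k t n (17/20 : ℝ) (by norm_num) (by norm_num) htk hn Sr hS0
        (hSum (17/20 : ℝ) (by norm_num) (by norm_num)) (Or.inl ⟨by norm_num, by norm_num, hp1⟩)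
    · exact piece 109 k t n (17/20 : ℝ) (by norm_num) (by norm_num) htk hn Sr hS0
        (hSum (17/20 : ℝ) (by norm_num) (by norm_num)) (Or.inl ⟨by norm_num, by norm_num, hp1⟩)
    · exact piece 110 k t n (17/20 : ℝ) (by norm_num) (by norm_num) htk hn Sr hS0
        (hSum (17/20 : ℝ) (by norm_num) (by norm_num)) (Or.inl ⟨by norm_num, by norm_num, hp1⟩)
    · exact piece 111 k t n (17/20 : ℝ) (by norm_num) (by norm_num) htk hn Sr hS0
        (hSum (17/20 : ℝ) (by norm_num) (by norm_num)) (Or.inl ⟨by norm_num, by norm_num, hp1⟩)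
    · exact piece 112 k t n (17/20 : ℝ) (by norm_num) (by norm_num) htk hn Sr hS0
        (hSum (17/20 : ℝ) (by norm_num) (by norm_num)) (Or.inl ⟨by norm_num, by norm_num, hp1⟩)
    · exact piece 113 k t n (17/20 : ℝ) (by norm_num) (by norm_num) htk hn Sr hS0
        (hSum (17/20 : ℝ) (by norm_num) (by norm_num)) (Or.inl ⟨by norm_num, by norm_num, hp1⟩)
    · exact piece 114 k t n (17/20 : ℝ) (by norm_num) (by norm_num) htk hn Sr hS0
        (hSum (17/20 : ℝ) (by norm_num) (by norm_num)) (Or.inl ⟨by norm_num, by norm_num, hp1⟩)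
    · exact piece 115 k t n (17/20 : ℝ) (by norm_num) (by norm_num) htk hn Sr hS0
        (hSum (17/20 : ℝ) (by norm_num) (by norm_num)) (Or.inl ⟨by norm_num, by norm_num, hp1⟩)
    · exact piece 116 k t n (17/20 : ℝ) (by norm_num) (by norm_num) htk hn Sr hS0
        (hSum (17/20 : ℝ) (by norm_num) (by norm_num)) (Or.inl ⟨by norm_num, by norm_num, hp1⟩)
    · exact piece 117 k t n (17/20 : ℝ) (by norm_num) (by norm_num) htk hn Sr hS0
        (hSum (17/20 : ℝ) (by norm_num) (by norm_num)) (Or.inl ⟨by norm_num, by norm_num, hp1⟩)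
    · exact piece 118 k t n (17/20 : ℝ) (by norm_num) (by norm_num) htk hn Sr hS0
        (hSum (17/20 : ℝ) (by norm_num) (by norm_num)) (Or.inl ⟨by norm_num, by norm_num, hp1⟩)
    · exact piece 119 k t n (17/20 : ℝ) (by norm_num) (by norm_num) htk hn Sr hS0
        (hSum (17/20 : ℝ) (by norm_num) (by norm_num)) (Or.inl ⟨by norm_num, by norm_num, hp1⟩)
    · exact piece 120 k t n (17/20 : ℝ) (by norm_num) (by norm_num) htk hn Sr hS0
        (hSum (17/20 : ℝ) (by norm_num) (by norm_num)) (Or.inl ⟨by norm_num, by norm_num, hp1⟩)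
    · exact piece 121 k t n (17/20 : ℝ) (by norm_num) (by norm_num) htk hn Sr hS0
        (hSum (17/20 : ℝ) (by norm_num) (by norm_num)) (Or.inl ⟨by norm_num, by norm_num, hp1⟩)
    · exact piece 122 k t n (17/20 : ℝ) (by norm_num) (by norm_num) htk hn Sr hS0
        (hSum (17/20 : ℝ) (by norm_num) (by norm_num)) (Or.inl ⟨by norm_num, by norm_num, hp1⟩)
    · exact piece 123 k t n (17/20 : ℝ) (by norm_num) (by norm_num) htk hn Sr hS0
        (hSum (17/20 : ℝ) (by norm_num) (by norm_num)) (Or.inl ⟨by norm_num, by norm_num, hp1⟩)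
    · exact piece 124 k t n (17/20 : ℝ) (by norm_num) (by norm_num) htk hn Sr hS0
        (hSum (17/20 : ℝ) (by norm_num) (by norm_num)) (Or.inl ⟨by norm_num, by norm_num, hp1⟩)
    · exact piece 125 k t n (17/20 : ℝ) (by norm_num) (by norm_num) htk hn Sr hS0
        (hSum (17/20 : ℝ) (by norm_num) (by norm_num)) (Or.inl ⟨by norm_num, by norm_num, hp1⟩)
    · exact piece 126 k t n (17/20 : ℝ) (by norm_num) (by norm_num) htk hn Sr hS0
        (hSum (17/20 : ℝ) (by norm_num) (by norm_num)) (Or.inl ⟨by norm_num, by norm_num, hp1⟩)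
    · exact piece 127 k t n (17/20 : ℝ) (by norm_num) (by norm_num) htk hn Sr hS0
        (hSum (17/20 : ℝ) (by norm_num) (by norm_num)) (Or.inl ⟨by norm_num, by norm_num, hp1⟩)
  apply hfinal
  have hF2' : 2 ≤ F.card := hF2
  have hcard2 : F.card ≤ G.card + 2 := by omega
  calc (F.card : ℝ) ≤ (G.card : ℝ) + 2 := by exact_mod_cast hcard2
    _ ≤ Sr + 2 := by linarith
    _ ≤ 1000 * 2.14799 ^ k + 2 := by linarith
    _ ≤ 1002 * 2.14799 ^ k := by nlinarith
end

section
/- Let k ≥ 1 and let F be a family of k-element finite sets such that for any four distinct sets A, B, C, D ∈ F one has (A △ B) ∩ (C △ D) ≠ ∅. Then |F| ≤ 2^{2k} + 2. -/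
open scoped symmDiff

/-- If `F` is a family of `k`-element finite sets (over an arbitrary ground type, `k ≥ 1`)
such that any four distinct members `A, B, C, D` satisfy `(A ∆ B) ∩ (C ∆ D) ≠ ∅`, then
`|F| ≤ 2^(2k) + 2`. -/
theorem intersecting_symmDiffs_easy_upper_bound (k : ℕ) (hk : 1 ≤ k)
    (α : Type*) [DecidableEq α] (F : Finset (Finset α))
    (hunif : ∀ A ∈ F, A.card = k)
    (hF : ∀ A ∈ F, ∀ B ∈ F, ∀ C ∈ F, ∀ D ∈ F,
      A ≠ B → A ≠ C → A ≠ D → B ≠ C → B ≠ D → C ≠ D →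
      ((A ∆ B) ∩ (C ∆ D)).Nonempty) :
    F.card ≤ 2 ^ (2 * k) + 2 := by
  by_cases h2 : F.card ≤ 2
  · have : (2:ℕ) ≤ 2 ^ (2*k) + 2 := le_add_self
    omega
  push_neg at h2
  obtain ⟨A, hA, B, hB, hAB⟩ : ∃ A ∈ F, ∃ B ∈ F, A ≠ B := by
    have : 1 < F.card := by omega
    exact Finset.one_lt_card.mp this
  set S : Finset α := A ∆ B with hS
  set s : Finset (Finset α) := (F.erase A).erase B with hs
  have hinj : Set.InjOn (fun C => C ∩ S) s := by
    intro C hC D hD hEq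
    have hC' := Finset.mem_coe.mp hC
    have hD' := Finset.mem_coe.mp hD
    rw [hs, Finset.mem_erase, Finset.mem_erase] at hC' hD'
    obtain ⟨hCB, hCA, hCF⟩ := hC'
    obtain ⟨hDB, hDA, hDF⟩ := hD'
    by_contra hCD
    obtain ⟨x, hx⟩ := hF A hA B hB C hCF D hDF hAB (Ne.symm hCA) (Ne.symm hDA)
      (Ne.symm hCB) (Ne.symm hDB) hCD
    rw [Finset.mem_inter, Finset.mem_symmDiff, Finset.mem_symmDiff] at hx
    obtain ⟨hx1, hx2⟩ := hx
    have hxS : x ∈ S := by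
      rw [hS, Finset.mem_symmDiff]; exact hx1
    have : x ∈ C ∩ S ↔ x ∈ D ∩ S := by
      simp only at hEq; rw [hEq]
    simp only [Finset.mem_inter, hxS, and_true] at this
    tauto
  have hmaps : ∀ C ∈ s, C ∩ S ∈ S.powerset := by
    intro C hC
    rw [Finset.mem_powerset]
    exact Finset.inter_subset_right
  have hcard : s.card ≤ S.powerset.card :=
    Finset.card_le_card_of_injOn _ hmaps hinj
  have hScard : S.card ≤ 2 * k := by
    have hsub : S ⊆ A ∪ B := by
      rw [hS]; simpa [Finset.sup_eq_union] using (symmDiff_le_sup : A ∆ B ≤ A ⊔ B)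
    calc S.card ≤ (A ∪ B).card := Finset.card_le_card hsub
      _ ≤ A.card + B.card := Finset.card_union_le _ _
      _ = 2 * k := by rw [hunif A hA, hunif B hB]; ring
  have hpow : S.powerset.card ≤ 2 ^ (2*k) := by
    rw [Finset.card_powerset]
    exact Nat.pow_le_pow_right (by norm_num) hScard
  have hBs : B ∈ F.erase A := Finset.mem_erase.mpr ⟨Ne.symm hAB, hB⟩
  have h1 : (F.erase A).card = s.card + 1 := by
    rw [hs, Finset.card_erase_of_mem hBs]
    have : 0 < (F.erase A).card := Finset.card_pos.mpr ⟨B, hBs⟩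
    omega
  have h0 : F.card = (F.erase A).card + 1 := by
    rw [Finset.card_erase_of_mem hA]
    have : 0 < F.card := by omega
    omega
  omega
end
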